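/- Assume h ≥ 0 on [0,1]. Let u be a solution of the traveling-wave problem with speed c > 0, and suppose there exist α ∈ ℝ and a positive finite limit lim_{v→0+} D(v)/v^α. Then u attains the value 0 at some finite point (i.e., there exists ξ ∈ ℝ with u(ξ) = 0) if and only if p + α > 2. Equivalently, the integral ∫₀^θ D(s)^{p'−1}/(c·s + H(s))^{p'−1} ds is finite if and only if p + α > 2. -/

import Mathlib

/-!
While `0 < u < θ` the reaction term vanishes, so `flux + c u + H(u)` is conserved along the
profile; since it tends to `0` with `u`, it vanishes identically on any arc along which `u`
descends to level `0`. On such an arc the equation can be solved for the slope,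
`u' = -1 / τ(u)` with `τ = (D / (c s + H))^{p'-1}`, so the `ξ`-length of the arc on which `u`
falls from `u(a)` to `v` is `∫_v^{u(a)} τ`. Hence `u` reaches `0` at a finite point exactly when
`τ` is integrable at `0`. Finally `(c s + H(s)) / s → c + h(0) > 0` and `D(s) / s^α → L > 0`, so
`τ(s)` is comparable to `s^{(α-1)/(p-1)}`, which is integrable at `0` iff `p + α > 2`.
-/

open Set MeasureTheory Filter

/-- The conjugate exponent `p' = p/(p-1)`. -/
noncomputable def pconj (p : ℝ) : ℝ := p / (p - 1)

/-- The constant `k(p)` from the paper. -/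
noncomputable def kfun (p : ℝ) : ℝ :=
  if p < 2 then 1 / (2 ^ (pconj p - 1) - 1)
  else if p = 2 then 1
  else pconj p / (pconj p - 1 +
    (1 + pconj p * (pconj p - 1) ^ ((1 : ℝ) / (pconj p - 2)) +
      (pconj p - 1) ^ (pconj p / (pconj p - 2))) /
    (1 + (pconj p - 1) ^ ((1 : ℝ) / (pconj p - 2))) ^ pconj p)

/-- Standing assumptions on the data `p, θ, D, H, h, g` (combustion setting). -/
structure CombSetup (p θ : ℝ) (D H h g : ℝ → ℝ) : Prop where
  hp : 1 < p
  hθ0 : 0 < θ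
  hθ1 : θ < 1
  hD : ContDiffOn ℝ 1 D (Ioo 0 1)
  hDpos : ∀ v ∈ Ioo (0 : ℝ) 1, 0 < D v
  hH : ContDiffOn ℝ 1 H (Icc 0 1)
  hH0 : H 0 = 0
  hh : ContinuousOn h (Icc 0 1)
  hHd : ∀ v ∈ Icc (0 : ℝ) 1, HasDerivWithinAt H (h v) (Icc 0 1) v
  hgc : ContinuousOn g (Icc 0 1)
  hg0 : ∀ v ∈ Icc (0 : ℝ) θ, g v = 0
  hgpos : ∀ v ∈ Ioo θ 1, 0 < g v
  hg1 : g 1 = 0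
  hInt : IntegrableOn (fun v => D v ^ (pconj p - 1) * g v) (Ioo 0 1)

/-- The diffusive flux `ξ ↦ D(u(ξ)) |u'(ξ)|^{p-2} u'(ξ)`. -/
noncomputable def flux (p : ℝ) (D u : ℝ → ℝ) : ℝ → ℝ :=
  fun ξ => D (u ξ) * (|deriv u ξ| ^ (p - 2) * deriv u ξ)

/-- Solution of the traveling-wave problem with speed `c`. -/
structure IsTWSol (p c : ℝ) (D h g : ℝ → ℝ) (u : ℝ → ℝ) : Prop where
  cont : Continuous u
  mem : ∀ ξ, u ξ ∈ Icc (0 : ℝ) 1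
  smooth : ContDiffOn ℝ 1 u {ξ | u ξ ∈ Ioo (0 : ℝ) 1}
  eqn : ∀ ξ ∈ {ξ | u ξ ∈ Ioo (0 : ℝ) 1},
    HasDerivAt (flux p D u) (-(c + h (u ξ)) * deriv u ξ - g (u ξ)) ξ
  flux_cont : Continuous (fun ξ => if u ξ ∈ Ioo (0 : ℝ) 1 then flux p D u ξ else 0)
  flux_to0 : ∀ ε > 0, ∃ δ > 0, ∀ ξ, u ξ ∈ Ioo (0 : ℝ) 1 → u ξ < δ → |flux p D u ξ| < ε
  flux_to1 : ∀ ε > 0, ∃ δ > 0, ∀ ξ, u ξ ∈ Ioo (0 : ℝ) 1 → 1 - δ < u ξ → |flux p D u ξ| < ε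
  lim_bot : Tendsto u atBot (nhds 1)
  lim_top : Tendsto u atTop (nhds 0)

/-- Positive solution of the first-order problem with parameter `c`. -/
structure IsFOSol (p c : ℝ) (D h g : ℝ → ℝ) (y : ℝ → ℝ) : Prop where
  cont : ContinuousOn y (Icc 0 1)
  eqn : ∀ v ∈ Ioo (0 : ℝ) 1, HasDerivAt y
    (pconj p * ((c + h v) * (max (y v) 0) ^ (1 / p) - D v ^ (pconj p - 1) * g v)) v
  y0 : y 0 = 0
  y1 : y 1 = 0
  pos : ∀ v ∈ Ioo (0 : ℝ) 1, 0 < y v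

open scoped Topology

theorem integrableOn_Ioo_iff_integrableAtFilter_nhdsGT {f : ℝ → ℝ} {a b : ℝ} (hab : a < b)
    (hf : ContinuousOn f (Ioc a b)) :
    IntegrableOn f (Ioo a b) ↔ IntegrableAtFilter f (𝓝[>] a) := by
  refine ⟨fun h => ⟨Ioo a b, Ioo_mem_nhdsGT hab, h⟩, fun ⟨s, hs, hfs⟩ => ?_⟩
  obtain ⟨c, hac, hcs⟩ := mem_nhdsGT_iff_exists_Ioo_subset.1 hs
  have hnear : IntegrableOn f (Ioo a (min c b)) :=
    hfs.mono_set ((Ioo_subset_Ioo_right (min_le_left _ _)).trans hcs)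
  have hfar : IntegrableOn f (Icc (min c b) b) :=
    (hf.mono fun x hx => ⟨(lt_min hac hab).trans_le hx.1, hx.2⟩).integrableOn_compact
      isCompact_Icc
  refine (hnear.union hfar).mono_set fun x hx => ?_
  rcases lt_or_ge x (min c b) with h | h
  · exact Or.inl ⟨hx.1, h⟩
  · exact Or.inr ⟨h, hx.2.le⟩

theorem integrableOn_Ioo_iff_of_tendsto_div {f g : ℝ → ℝ} {a b ℓ : ℝ} (hab : a < b)
    (hf : ContinuousOn f (Ioc a b)) (hg : ContinuousOn g (Ioc a b)) (hℓ : ℓ ≠ 0)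
    (hfg : Tendsto (fun x => f x / g x) (𝓝[>] a) (𝓝 ℓ)) :
    IntegrableOn f (Ioo a b) ↔ IntegrableOn g (Ioo a b) := by
  have hΘ : g =Θ[𝓝[>] a] f := Asymptotics.isTheta_of_div_tendsto_nhds_ne_zero hfg hℓ
  have hmeas {k : ℝ → ℝ} (hk : ContinuousOn k (Ioc a b)) :
      StronglyMeasurableAtFilter k (𝓝[>] a) := by
    rw [← nhdsWithin_Ioo_eq_nhdsGT hab]
    exact (hk.mono Ioo_subset_Ioc_self).stronglyMeasurableAtFilter_nhdsWithin measurableSet_Ioo a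
  rw [integrableOn_Ioo_iff_integrableAtFilter_nhdsGT hab hf,
    integrableOn_Ioo_iff_integrableAtFilter_nhdsGT hab hg]
  exact ⟨hΘ.isBigO.integrableAtFilter (hmeas hg), hΘ.symm.isBigO.integrableAtFilter (hmeas hf)⟩

theorem integrableOn_Ioo_rpow_div_rpow_iff {D M : ℝ → ℝ} {θ α q L m : ℝ} (hθ : 0 < θ)
    (hq : 0 < q) (hD : ContinuousOn D (Ioc 0 θ)) (hM : ContinuousOn M (Ioc 0 θ))
    (hDpos : ∀ s ∈ Ioc 0 θ, 0 < D s) (hMpos : ∀ s ∈ Ioc 0 θ, 0 < M s) (hL : 0 < L)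
    (hm : 0 < m) (hDlim : Tendsto (fun s => D s / s ^ α) (𝓝[>] 0) (𝓝 L))
    (hMlim : Tendsto (fun s => M s / s) (𝓝[>] 0) (𝓝 m)) :
    IntegrableOn (fun s => D s ^ q / M s ^ q) (Ioo 0 θ) ↔ -1 < (α - 1) * q := by
  have hratio : Tendsto (fun s => D s ^ q / M s ^ q / s ^ ((α - 1) * q)) (𝓝[>] 0)
      (𝓝 ((L / m) ^ q)) := by
    refine ((hDlim.div hMlim hm.ne').rpow_const (Or.inr hq.le)).congr' ?_
    filter_upwards [Ioo_mem_nhdsGT hθ] with s hs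
    have hs0 := hs.1
    have hDs := hDpos s (Ioo_subset_Ioc_self hs)
    have hMs := hMpos s (Ioo_subset_Ioc_self hs)
    simp only [Pi.div_apply]
    rw [Real.div_rpow (by positivity) (by positivity), Real.div_rpow hDs.le (by positivity),
      Real.div_rpow hMs.le hs0.le, ← Real.rpow_mul hs0.le, sub_mul, one_mul, Real.rpow_sub hs0]
    field_simp
  have hcont : ContinuousOn (fun s => D s ^ q / M s ^ q) (Ioc 0 θ) :=
    (hD.rpow_const fun _ _ => Or.inr hq.le).div (hM.rpow_const fun _ _ => Or.inr hq.le)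
      fun s hs => (Real.rpow_pos_of_pos (hMpos s hs) q).ne'
  have hpow : ContinuousOn (fun s : ℝ => s ^ ((α - 1) * q)) (Ioc 0 θ) :=
    continuousOn_id.rpow_const fun s hs => Or.inl hs.1.ne'
  rw [integrableOn_Ioo_iff_of_tendsto_div hθ hcont hpow (by positivity) hratio,
    intervalIntegral.integrableOn_Ioo_rpow_iff hθ]

theorem eq_neg_rpow_of_mul_abs_rpow_mul_eq_neg {p d m w : ℝ} (hp : 1 < p) (hd : 0 < d)
    (hm : 0 < m) (h : d * (|w| ^ (p - 2) * w) = -m) : w = -(m / d) ^ (p - 1)⁻¹ := by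
  have hw : w < 0 := by
    by_contra! hw
    have : 0 ≤ d * (|w| ^ (p - 2) * w) := by positivity
    linarith
  have hpow : |w| ^ (p - 1) = m / d := by
    rw [show p - 1 = p - 2 + 1 by ring, Real.rpow_add_one (abs_pos.2 hw.ne).ne',
      eq_div_iff hd.ne']
    rw [abs_of_neg hw] at h ⊢
    linear_combination -h
  rw [← hpow, Real.rpow_rpow_inv (abs_nonneg w) (sub_pos.2 hp).ne', abs_of_neg hw, neg_neg]

theorem pconj_sub_one {p : ℝ} (hp : p ≠ 1) : pconj p - 1 = (p - 1)⁻¹ := by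
  have : p - 1 ≠ 0 := sub_ne_zero.2 hp
  unfold pconj
  field_simp
  ring

noncomputable def timeDensity (p c : ℝ) (D H : ℝ → ℝ) (s : ℝ) : ℝ :=
  D s ^ (pconj p - 1) / (c * s + H s) ^ (pconj p - 1)

namespace CombSetup

variable {p θ c : ℝ} {D H h g : ℝ → ℝ}

theorem H_nonneg (S : CombSetup p θ D H h g) (hh0 : ∀ v ∈ Icc (0 : ℝ) 1, 0 ≤ h v)
    {v : ℝ} (hv : v ∈ Icc (0 : ℝ) 1) : 0 ≤ H v := by
  have hmono : MonotoneOn H (Icc 0 1) := by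
    refine monotoneOn_of_hasDerivWithinAt_nonneg (convex_Icc 0 1) S.hH.continuousOn
      (fun x hx => ?_) (fun x hx => hh0 x (interior_subset hx))
    exact (S.hHd x (interior_subset hx)).mono interior_subset
  simpa [S.hH0] using hmono (left_mem_Icc.2 zero_le_one) hv hv.1

theorem mem_Ioo_of_mem_Ioc (S : CombSetup p θ D H h g) {v : ℝ} (hv : v ∈ Ioc 0 θ) :
    v ∈ Ioo (0 : ℝ) 1 :=
  ⟨hv.1, hv.2.trans_lt S.hθ1⟩

theorem add_H_pos (S : CombSetup p θ D H h g) (hh0 : ∀ v ∈ Icc (0 : ℝ) 1, 0 ≤ h v)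
    (hc : 0 < c) {v : ℝ} (hv : v ∈ Ioc 0 θ) : 0 < c * v + H v :=
  add_pos_of_pos_of_nonneg (mul_pos hc hv.1)
    (S.H_nonneg hh0 (Ioo_subset_Icc_self (S.mem_Ioo_of_mem_Ioc hv)))

theorem tendsto_add_H_div (S : CombSetup p θ D H h g) :
    Tendsto (fun s => (c * s + H s) / s) (𝓝[>] 0) (𝓝 (c + h 0)) := by
  have hderiv : HasDerivWithinAt (fun s => c * s + H s) (c + h 0) (Ioi 0) 0 := by
    have hH := (S.hHd 0 (left_mem_Icc.2 zero_le_one)).mono_of_mem_nhdsWithin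
      (Icc_mem_nhdsGT zero_lt_one)
    exact (((hasDerivAt_id (0 : ℝ)).const_mul c).hasDerivWithinAt.add hH).congr_deriv (by simp)
  refine ((hasDerivWithinAt_iff_tendsto_slope' (lt_irrefl 0)).1 hderiv).congr' ?_
  filter_upwards with s
  simp [slope_def_field, S.hH0]

theorem continuousOn_add_H (S : CombSetup p θ D H h g) :
    ContinuousOn (fun s => c * s + H s) (Ioc 0 θ) :=
  (continuous_const.mul continuous_id).continuousOn.add
    (S.hH.continuousOn.mono fun _ hv => Ioo_subset_Icc_self (S.mem_Ioo_of_mem_Ioc hv))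

theorem timeDensity_pos (S : CombSetup p θ D H h g) (hh0 : ∀ v ∈ Icc (0 : ℝ) 1, 0 ≤ h v)
    (hc : 0 < c) {s : ℝ} (hs : s ∈ Ioc 0 θ) : 0 < timeDensity p c D H s :=
  div_pos (Real.rpow_pos_of_pos (S.hDpos s (S.mem_Ioo_of_mem_Ioc hs)) _)
    (Real.rpow_pos_of_pos (S.add_H_pos hh0 hc hs) _)

theorem continuousOn_timeDensity (S : CombSetup p θ D H h g)
    (hh0 : ∀ v ∈ Icc (0 : ℝ) 1, 0 ≤ h v) (hc : 0 < c) :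
    ContinuousOn (timeDensity p c D H) (Ioc 0 θ) :=
  ((S.hD.continuousOn.mono fun _ => S.mem_Ioo_of_mem_Ioc).rpow_const fun s hs =>
    Or.inl (S.hDpos s (S.mem_Ioo_of_mem_Ioc hs)).ne').div
    (S.continuousOn_add_H.rpow_const fun _ hs => Or.inl (S.add_H_pos hh0 hc hs).ne')
    fun _ hs => (Real.rpow_pos_of_pos (S.add_H_pos hh0 hc hs) _).ne'

theorem integrableOn_timeDensity_iff (S : CombSetup p θ D H h g)
    (hh0 : ∀ v ∈ Icc (0 : ℝ) 1, 0 ≤ h v) (hc : 0 < c) {α L : ℝ} (hL : 0 < L)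
    (hDlim : Tendsto (fun v => D v / v ^ α) (𝓝[>] 0) (𝓝 L)) :
    IntegrableOn (timeDensity p c D H) (Ioo 0 θ) ↔ 2 < p + α := by
  have hp : 0 < p - 1 := sub_pos.2 S.hp
  have hq : pconj p - 1 = (p - 1)⁻¹ := pconj_sub_one S.hp.ne'
  refine (integrableOn_Ioo_rpow_div_rpow_iff S.hθ0 (by rw [hq]; positivity)
    (S.hD.continuousOn.mono fun _ => S.mem_Ioo_of_mem_Ioc) S.continuousOn_add_H
    (fun s hs => S.hDpos s (S.mem_Ioo_of_mem_Ioc hs))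
    (fun _ => S.add_H_pos hh0 hc) hL
    (add_pos_of_pos_of_nonneg hc (hh0 0 (left_mem_Icc.2 zero_le_one))) hDlim
    S.tendsto_add_H_div).trans ?_
  rw [hq, ← div_eq_mul_inv, lt_div_iff₀ hp]
  constructor <;> intro <;> linarith

end CombSetup

noncomputable def firstIntegral (p c : ℝ) (D H u : ℝ → ℝ) (ξ : ℝ) : ℝ :=
  flux p D u ξ + (c * u ξ + H (u ξ))

namespace IsTWSol

variable {p θ c : ℝ} {D H h g u : ℝ → ℝ}

theorem hasDerivAt (hu : IsTWSol p c D h g u) {ξ : ℝ} (hξ : u ξ ∈ Ioo (0 : ℝ) 1) :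
    HasDerivAt u (deriv u ξ) ξ :=
  ((hu.smooth.differentiableOn one_ne_zero ξ hξ).differentiableAt
    ((isOpen_Ioo.preimage hu.cont).mem_nhds hξ)).hasDerivAt

theorem hasDerivAt_firstIntegral (hu : IsTWSol p c D h g u) (S : CombSetup p θ D H h g)
    {ξ : ℝ} (hξ : u ξ ∈ Ioo 0 θ) : HasDerivAt (firstIntegral p c D H u) 0 ξ := by
  have hξ1 : u ξ ∈ Ioo (0 : ℝ) 1 := ⟨hξ.1, hξ.2.trans S.hθ1⟩
  have hu' := hu.hasDerivAt hξ1
  have hH : HasDerivAt H (h (u ξ)) (u ξ) :=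
    (S.hHd (u ξ) (Ioo_subset_Icc_self hξ1)).hasDerivAt (Icc_mem_nhds hξ1.1 hξ1.2)
  refine ((hu.eqn ξ hξ1).add ((hu'.const_mul c).add (hH.comp ξ hu'))).congr_deriv ?_
  rw [S.hg0 (u ξ) (Ioo_subset_Icc_self hξ)]
  ring

theorem firstIntegral_eq (hu : IsTWSol p c D h g u) (S : CombSetup p θ D H h g) {a b : ℝ}
    (hmaps : MapsTo u (Icc a b) (Ioo 0 θ)) :
    ∀ x ∈ Icc a b, firstIntegral p c D H u x = firstIntegral p c D H u a :=
  constant_of_has_deriv_right_zero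
    (fun _ hξ => (hu.hasDerivAt_firstIntegral S (hmaps hξ)).continuousAt.continuousWithinAt)
    fun _ hξ => (hu.hasDerivAt_firstIntegral S (hmaps (Ico_subset_Icc_self hξ))).hasDerivWithinAt

theorem firstIntegral_eq_zero (hu : IsTWSol p c D h g u) (S : CombSetup p θ D H h g) {a : ℝ}
    (hsmall : ∀ ε > 0, ∃ b ≥ a, MapsTo u (Icc a b) (Ioo 0 θ) ∧ u b < ε) :
    firstIntegral p c D H u a = 0 := by
  have hM : ContinuousWithinAt (fun v => c * v + H v) (Icc 0 1) 0 :=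
    (continuous_const.mul continuous_id).continuousWithinAt.add
      (S.hH.continuousOn 0 (left_mem_Icc.2 zero_le_one))
  refine eq_of_forall_dist_le fun ε hε => ?_
  obtain ⟨δ₁, hδ₁, hflux⟩ := hu.flux_to0 (ε / 2) (half_pos hε)
  obtain ⟨δ₂, hδ₂, hMδ⟩ := Metric.continuousWithinAt_iff.1 hM (ε / 2) (half_pos hε)
  obtain ⟨b, hab, hmaps, hb⟩ := hsmall (min δ₁ δ₂) (lt_min hδ₁ hδ₂)
  have hub := hmaps (right_mem_Icc.2 hab)
  have hub1 : u b ∈ Ioo (0 : ℝ) 1 := ⟨hub.1, hub.2.trans S.hθ1⟩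
  have hfluxb : |flux p D u b| < ε / 2 := hflux b hub1 (hb.trans_le (min_le_left _ _))
  have hMb : dist (c * u b + H (u b)) (c * 0 + H 0) < ε / 2 :=
    hMδ (Ioo_subset_Icc_self hub1) (by
      rw [Real.dist_eq, sub_zero, abs_of_pos hub.1]
      exact hb.trans_le (min_le_right _ _))
  rw [S.hH0, mul_zero, add_zero, Real.dist_eq, sub_zero] at hMb
  rw [← hu.firstIntegral_eq S hmaps b (right_mem_Icc.2 hab), Real.dist_eq, sub_zero,
    firstIntegral]
  linarith [abs_add_le (flux p D u b) (c * u b + H (u b))]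

theorem hasDerivAt_of_firstIntegral_eq_zero (hu : IsTWSol p c D h g u)
    (S : CombSetup p θ D H h g) (hh0 : ∀ v ∈ Icc (0 : ℝ) 1, 0 ≤ h v) (hc : 0 < c) {ξ : ℝ}
    (hξ : u ξ ∈ Ioo 0 θ) (hF : firstIntegral p c D H u ξ = 0) :
    HasDerivAt u (-(timeDensity p c D H (u ξ))⁻¹) ξ := by
  have hξ1 : u ξ ∈ Ioo (0 : ℝ) 1 := ⟨hξ.1, hξ.2.trans S.hθ1⟩
  have hD := S.hDpos _ hξ1
  have hM := S.add_H_pos hh0 hc (Ioo_subset_Ioc_self hξ)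
  have hderiv : deriv u ξ = -((c * u ξ + H (u ξ)) / D (u ξ)) ^ (p - 1)⁻¹ :=
    eq_neg_rpow_of_mul_abs_rpow_mul_eq_neg S.hp hD hM (by
      rw [firstIntegral, flux] at hF
      linarith)
  rw [timeDensity, pconj_sub_one S.hp.ne', inv_div, ← Real.div_rpow hM.le hD.le, ← hderiv]
  exact hu.hasDerivAt hξ1

theorem le_and_integral_timeDensity_eq_sub (hu : IsTWSol p c D h g u) (S : CombSetup p θ D H h g)
    (hh0 : ∀ v ∈ Icc (0 : ℝ) 1, 0 ≤ h v) (hc : 0 < c) {a b : ℝ} (hab : a ≤ b)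
    (hmaps : MapsTo u (Icc a b) (Ioo 0 θ)) (hF : firstIntegral p c D H u a = 0) :
    u b ≤ u a ∧ ∫ s in u b..u a, timeDensity p c D H s = b - a := by
  set τ := timeDensity p c D H
  have hmaps' : MapsTo u (Icc a b) (Ioc 0 θ) := hmaps.mono_right Ioo_subset_Ioc_self
  have hτu_pos : ∀ x ∈ Icc a b, 0 < τ (u x) := fun x hx =>
    S.timeDensity_pos hh0 hc (hmaps' hx)
  have hderiv : ∀ x ∈ Icc a b, HasDerivAt u (-(τ (u x))⁻¹) x := fun x hx =>
    hu.hasDerivAt_of_firstIntegral_eq_zero S hh0 hc (hmaps hx)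
      ((hu.firstIntegral_eq S hmaps x hx).trans hF)
  have hanti : AntitoneOn u (Icc a b) :=
    antitoneOn_of_hasDerivWithinAt_nonpos (convex_Icc a b) hu.cont.continuousOn
      (fun x hx => (hderiv x (interior_subset hx)).hasDerivWithinAt)
      fun x hx => by
        have := hτu_pos x (interior_subset hx)
        simp only [neg_nonpos]
        positivity
  refine ⟨hanti (left_mem_Icc.2 hab) (right_mem_Icc.2 hab) hab, ?_⟩
  have hτ : ContinuousOn τ (Ioc 0 θ) := S.continuousOn_timeDensity hh0 hc
  rw [← uIcc_of_le hab] at hmaps' hτu_pos hderiv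
  have hsubst := intervalIntegral.integral_comp_mul_deriv' hderiv
    ((hτ.comp hu.cont.continuousOn hmaps').inv₀ fun x hx => (hτu_pos x hx).ne').neg
    (hτ.mono (image_subset_iff.2 hmaps'))
  have hone : ∫ x in a..b, (τ ∘ u) x * -(τ (u x))⁻¹ = ∫ _ in a..b, (-1 : ℝ) :=
    intervalIntegral.integral_congr fun x hx => by
      simp [(hτu_pos x hx).ne']
  rw [intervalIntegral.integral_symm, ← hsubst, hone]
  simp

theorem exists_eq_zero_of_integrableOn (hu : IsTWSol p c D h g u)
    (S : CombSetup p θ D H h g) (hh0 : ∀ v ∈ Icc (0 : ℝ) 1, 0 ≤ h v) (hc : 0 < c)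
    (hint : IntegrableOn (timeDensity p c D H) (Ioo 0 θ)) : ∃ ξ, u ξ = 0 := by
  by_contra! hne
  obtain ⟨a, ha⟩ := eventually_atTop.1 (hu.lim_top.eventually_lt_const S.hθ0)
  have hmaps (b : ℝ) : MapsTo u (Icc a b) (Ioo 0 θ) := fun ξ hξ =>
    ⟨(hu.mem ξ).1.lt_of_ne' (hne ξ), ha ξ hξ.1⟩
  have hFa : firstIntegral p c D H u a = 0 := hu.firstIntegral_eq_zero S fun ε hε => by
    obtain ⟨b, hbε, hab⟩ :=
      ((hu.lim_top.eventually_lt_const hε).and (eventually_ge_atTop a)).exists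
    exact ⟨b, hab, hmaps b, hbε⟩
  set C := ∫ s in Ioo 0 θ, timeDensity p c D H s
  have hτ_nonneg : ∀ s ∈ Ioo 0 θ, 0 ≤ timeDensity p c D H s := fun s hs =>
    (S.timeDensity_pos hh0 hc (Ioo_subset_Ioc_self hs)).le
  have hC : 0 ≤ C := setIntegral_nonneg measurableSet_Ioo hτ_nonneg
  have hab : a ≤ a + C + 1 := by linarith
  obtain ⟨hba, htime⟩ := hu.le_and_integral_timeDensity_eq_sub S hh0 hc hab (hmaps _) hFa
  have hle : ∫ s in u (a + C + 1)..u a, timeDensity p c D H s ≤ C := by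
    rw [intervalIntegral.integral_of_le hba]
    refine setIntegral_mono_set hint
      ((ae_restrict_iff' measurableSet_Ioo).2 (ae_of_all _ hτ_nonneg)) ?_
    refine LE.le.eventuallyLE fun s hs => ⟨?_, ?_⟩
    · exact (hmaps _ (right_mem_Icc.2 hab)).1.trans hs.1
    · exact hs.2.trans_lt (hmaps _ (left_mem_Icc.2 hab)).2
  linarith

theorem integrableOn_of_exists_eq_zero (hu : IsTWSol p c D h g u)
    (S : CombSetup p θ D H h g) (hh0 : ∀ v ∈ Icc (0 : ℝ) 1, 0 ≤ h v) (hc : 0 < c)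
    (hz : ∃ ξ, u ξ = 0) : IntegrableOn (timeDensity p c D H) (Ioo 0 θ) := by
  have hbdd : BddBelow {ξ | u ξ = 0} := by
    obtain ⟨m, hm⟩ := eventually_atBot.1 (hu.lim_bot.eventually_const_lt one_pos)
    exact ⟨m, fun ξ hξ => not_lt.1 fun hlt => (hm ξ hlt.le).ne' hξ⟩
  set ζ := sInf {ξ | u ξ = 0}
  have hζ : u ζ = 0 := (isClosed_singleton.preimage hu.cont).csInf_mem hz hbdd
  -- `ζ` is the first zero of `u`; the points `x n` increase to it from a left neighbourhood
  -- on which `0 < u < θ`, and the descent times `x n - x 0` stay below `ζ - x 0`.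
  obtain ⟨y, hyζ, hy⟩ := exists_Ioc_subset_of_mem_nhds
    (hu.cont.continuousAt.preimage_mem_nhds (Iio_mem_nhds (hζ ▸ S.hθ0)))
    ⟨ζ - 1, sub_one_lt ζ⟩
  obtain ⟨x, hx_mono, hx_mem, hx_lim⟩ := exists_seq_strictMono_tendsto' hyζ
  have hux : Tendsto (u ∘ x) atTop (𝓝 0) := hζ ▸ (hu.cont.tendsto ζ).comp hx_lim
  have hmaps (n : ℕ) : MapsTo u (Icc (x 0) (x n)) (Ioo 0 θ) := fun ξ hξ =>
    have hξζ : ξ < ζ := hξ.2.trans_lt (hx_mem n).2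
    ⟨(hu.mem ξ).1.lt_of_ne' (notMem_of_lt_csInf (s := {ξ | u ξ = 0}) hξζ hbdd),
      hy ⟨(hx_mem 0).1.trans_le hξ.1, hξζ.le⟩⟩
  have hx0 (n : ℕ) : x 0 ≤ x n := hx_mono.monotone (Nat.zero_le n)
  have hFa : firstIntegral p c D H u (x 0) = 0 := hu.firstIntegral_eq_zero S fun ε hε => by
    obtain ⟨n, hn⟩ := (hux.eventually_lt_const hε).exists
    exact ⟨x n, hx0 n, hmaps n, hn⟩
  have hua : u (x 0) ∈ Ioo 0 θ := hmaps 0 (left_mem_Icc.2 le_rfl)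
  have hτ : ContinuousOn (timeDensity p c D H) (Ioc 0 θ) := S.continuousOn_timeDensity hh0 hc
  have hsub (n : ℕ) : Icc (u (x n)) (u (x 0)) ⊆ Ioc 0 θ := fun s hs =>
    ⟨(hmaps n (right_mem_Icc.2 (hx0 n))).1.trans_le hs.1, hs.2.trans hua.2.le⟩
  have hnear : IntegrableOn (timeDensity p c D H) (Ioc 0 (u (x 0))) := by
    refine integrableOn_Ioc_of_intervalIntegral_norm_bounded_left (I := ζ - x 0)
      (fun n => ?_) hux (Eventually.of_forall fun n => ?_)
    · exact ((hτ.mono (hsub n)).integrableOn_compact isCompact_Icc).mono_set Ioc_subset_Icc_self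
    · rw [Function.comp_apply]
      obtain ⟨hle, htime⟩ := hu.le_and_integral_timeDensity_eq_sub S hh0 hc (hx0 n) (hmaps n) hFa
      rw [setIntegral_congr_fun measurableSet_Ioc fun s hs => Real.norm_of_nonneg
          (S.timeDensity_pos hh0 hc (hsub n (Ioc_subset_Icc_self hs))).le,
        ← intervalIntegral.integral_of_le hle, htime]
      linarith [(hx_mem n).2]
  rw [integrableOn_Ioo_iff_integrableAtFilter_nhdsGT S.hθ0 hτ]
  exact ⟨_, Ioc_mem_nhdsGT hua.1, hnear⟩

theorem exists_eq_zero_iff_integrableOn (hu : IsTWSol p c D h g u)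
    (S : CombSetup p θ D H h g) (hh0 : ∀ v ∈ Icc (0 : ℝ) 1, 0 ≤ h v) (hc : 0 < c) :
    (∃ ξ, u ξ = 0) ↔ IntegrableOn (timeDensity p c D H) (Ioo 0 θ) :=
  ⟨hu.integrableOn_of_exists_eq_zero S hh0 hc, hu.exists_eq_zero_of_integrableOn S hh0 hc⟩

end IsTWSol

/-- Asymptotics near 0.
Under power-type behavior `D(v) ∼ v^α` as `v → 0+`, the profile attains 0 at a finite
point iff `p + α > 2`, equivalently iff `∫₀^θ D^{p'-1}/(c s + H(s))^{p'-1} ds < ∞`. -/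
theorem stmt19 (p θ c α : ℝ) (D H h g u : ℝ → ℝ) (S : CombSetup p θ D H h g)
    (hh0 : ∀ v ∈ Icc (0 : ℝ) 1, 0 ≤ h v)
    (hc : 0 < c) (hu : IsTWSol p c D h g u)
    (hDlim : ∃ L > (0 : ℝ),
      Tendsto (fun v => D v / v ^ α) (nhdsWithin 0 (Ioi (0 : ℝ))) (nhds L)) :
    ((∃ ξ : ℝ, u ξ = 0) ↔ 2 < p + α) ∧
    (IntegrableOn (fun s => D s ^ (pconj p - 1) / (c * s + H s) ^ (pconj p - 1))
        (Ioo 0 θ) ↔ 2 < p + α) := by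
  obtain ⟨L, hL, hDlim⟩ := hDlim
  have hint : IntegrableOn (timeDensity p c D H) (Ioo 0 θ) ↔ 2 < p + α :=
    S.integrableOn_timeDensity_iff hh0 hc hL hDlim
  exact ⟨(hu.exists_eq_zero_iff_integrableOn S hh0 hc).trans hint, hint⟩
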